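/- arXiv:2510.09123 — 2 statements merged into one kernel-verified Lean document; each statement's English description precedes it below -/
import Mathlib

section
/- Let X, Y be independent integrable real random variables with CDFs F and G, let X' be an independent copy of X and Y' an independent copy of Y, with X, X', Y, Y' mutually independent. Then ∫_ℝ (F(x) - G(x))² dx = E|X - Y| - (1/2)E|X - X'| - (1/2)E|Y - Y'|. -/
/-!
The length |a - b| is the Lebesgue measure of `Ici a ∆ Ici b`. Integrating this over `ω` and
swapping the integrals (Fubini) gives `E|A - B| = ∫ P(exactly one of A ≤ x, B ≤ x) dx`, and for
independent `A`, `B` the integrand is `F_A + F_B - 2 F_A F_B`. The theorem then follows from the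
pointwise identity `(F - G)² = (F + G - 2FG) - ½ (2F - 2F²) - ½ (2G - 2G²)`.
-/

open MeasureTheory ProbabilityTheory Set
open scoped symmDiff

lemma Real.volume_Ici_symmDiff_Ici (a b : ℝ) :
    volume (Ici a ∆ Ici b) = ENNReal.ofReal |a - b| := by
  wlog hab : b ≤ a generalizing a b
  · rw [symmDiff_comm, abs_sub_comm]
    exact this b a (le_of_not_ge hab)
  rw [symmDiff_of_le (Ici_subset_Ici.2 hab), Ici_sdiff_Ici, Real.volume_Ico,
    abs_of_nonneg (sub_nonneg.2 hab)]

lemma Real.volume_real_Ici_symmDiff_Ici (a b : ℝ) :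
    volume.real (Ici a ∆ Ici b) = |a - b| := by
  rw [measureReal_def, Real.volume_Ici_symmDiff_Ici, ENNReal.toReal_ofReal (abs_nonneg _)]

lemma measureReal_symmDiff_eq_add_sub_inter {α : Type*} [MeasurableSpace α] {μ : Measure α}
    [IsFiniteMeasure μ] {s t : Set α} (hs : MeasurableSet s) (ht : MeasurableSet t) :
    μ.real (s ∆ t) = μ.real s + μ.real t - 2 * μ.real (s ∩ t) := by
  have hst := measureReal_inter_add_sdiff (μ := μ) (s := s) ht
  have hts := measureReal_inter_add_sdiff (μ := μ) (s := t) hs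
  rw [inter_comm] at hts
  rw [measureReal_symmDiff_eq hs ht]
  linarith

lemma ProbabilityTheory.IndepFun.measureReal_symmDiff_eq {Ω : Type*} [MeasurableSpace Ω]
    {μ : Measure Ω} [IsFiniteMeasure μ] {A B : Ω → ℝ} (hAB : IndepFun A B μ)
    (hA : Measurable A) (hB : Measurable B) (x : ℝ) :
    μ.real ({ω | A ω ≤ x} ∆ {ω | B ω ≤ x}) = μ.real {ω | A ω ≤ x} + μ.real {ω | B ω ≤ x}
      - 2 * (μ.real {ω | A ω ≤ x} * μ.real {ω | B ω ≤ x}) := by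
  rw [measureReal_symmDiff_eq_add_sub_inter (measurableSet_le hA measurable_const)
    (measurableSet_le hB measurable_const)]
  congr 2
  simp only [measureReal_def, ← ENNReal.toReal_mul]
  exact congrArg ENNReal.toReal
    (hAB.measure_inter_preimage_eq_mul _ _ measurableSet_Iic measurableSet_Iic)

lemma ProbabilityTheory.IdentDistrib.measureReal_le_eq {Ω Ω' : Type*} [MeasurableSpace Ω]
    [MeasurableSpace Ω'] {μ : Measure Ω} {ν : Measure Ω'} {A : Ω → ℝ} {B : Ω' → ℝ}
    (h : IdentDistrib A B μ ν) (x : ℝ) : μ.real {ω | A ω ≤ x} = ν.real {ω | B ω ≤ x} :=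
  congrArg ENNReal.toReal (h.measure_mem_eq measurableSet_Iic)

section BetweenGraphs

variable {Ω : Type*} {A B : Ω → ℝ}

def betweenGraphs (A B : Ω → ℝ) : Set (Ω × ℝ) :=
  {p | A p.1 ≤ p.2} ∆ {p | B p.1 ≤ p.2}

lemma indicator_betweenGraphs_apply (ω : Ω) (x : ℝ) :
    (betweenGraphs A B).indicator (1 : Ω × ℝ → ℝ) (ω, x)
      = (Ici (A ω) ∆ Ici (B ω)).indicator 1 x :=
  rfl

lemma integral_indicator_betweenGraphs_eq_abs_sub (ω : Ω) :
    ∫ x, (betweenGraphs A B).indicator (1 : Ω × ℝ → ℝ) (ω, x) = |A ω - B ω| := by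
  simp only [indicator_betweenGraphs_apply]
  rw [integral_indicator_one (measurableSet_Ici.symmDiff measurableSet_Ici),
    Real.volume_real_Ici_symmDiff_Ici]

variable [MeasurableSpace Ω] {μ : Measure Ω}

lemma measurableSet_betweenGraphs (hA : Measurable A) (hB : Measurable B) :
    MeasurableSet (betweenGraphs A B) :=
  (measurableSet_le (hA.comp measurable_fst) measurable_snd).symmDiff
    (measurableSet_le (hB.comp measurable_fst) measurable_snd)

lemma integral_indicator_betweenGraphs_eq_measureReal (hA : Measurable A) (hB : Measurable B)
    (x : ℝ) :
    ∫ ω, (betweenGraphs A B).indicator (1 : Ω × ℝ → ℝ) (ω, x) ∂μ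
      = μ.real ({ω | A ω ≤ x} ∆ {ω | B ω ≤ x}) :=
  integral_indicator_one ((measurableSet_le hA measurable_const).symmDiff
    (measurableSet_le hB measurable_const))

lemma integrable_indicator_betweenGraphs (hA : Measurable A) (hB : Measurable B)
    (hAB : Integrable (fun ω ↦ A ω - B ω) μ) :
    Integrable ((betweenGraphs A B).indicator (1 : Ω × ℝ → ℝ)) (μ.prod volume) := by
  have hE := measurableSet_betweenGraphs hA hB
  refine (integrable_prod_iff (measurable_one.indicator hE).aestronglyMeasurable).2
    ⟨.of_forall fun ω ↦ ?_, ?_⟩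
  · simp only [indicator_betweenGraphs_apply]
    exact (integrable_indicator_iff (measurableSet_Ici.symmDiff measurableSet_Ici)).2
      (integrableOn_const (by simp [Real.volume_Ici_symmDiff_Ici]))
  · have hnorm (p : Ω × ℝ) : ‖(betweenGraphs A B).indicator (1 : Ω × ℝ → ℝ) p‖
        = (betweenGraphs A B).indicator 1 p :=
      Real.norm_of_nonneg (indicator_nonneg (fun _ _ ↦ zero_le_one) p)
    simp only [hnorm, integral_indicator_betweenGraphs_eq_abs_sub]
    exact hAB.abs

variable [SFinite μ]

lemma integral_abs_sub_eq_integral_measureReal_symmDiff (hA : Measurable A)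
    (hB : Measurable B) (hAB : Integrable (fun ω ↦ A ω - B ω) μ) :
    ∫ ω, |A ω - B ω| ∂μ = ∫ x, μ.real ({ω | A ω ≤ x} ∆ {ω | B ω ≤ x}) := by
  simp only [← integral_indicator_betweenGraphs_eq_abs_sub,
    ← integral_indicator_betweenGraphs_eq_measureReal (μ := μ) hA hB]
  exact integral_integral_swap (integrable_indicator_betweenGraphs hA hB hAB)

lemma integrable_measureReal_symmDiff (hA : Measurable A) (hB : Measurable B)
    (hAB : Integrable (fun ω ↦ A ω - B ω) μ) :
    Integrable (fun x ↦ μ.real ({ω | A ω ≤ x} ∆ {ω | B ω ≤ x})) := by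
  simpa only [integral_indicator_betweenGraphs_eq_measureReal hA hB] using
    (integrable_indicator_betweenGraphs hA hB hAB).integral_prod_right

end BetweenGraphs

theorem cramer_distance_eq_energy {Ω : Type*} [MeasurableSpace Ω]
    (μ : Measure Ω) [IsProbabilityMeasure μ]
    (X X' Y Y' : Ω → ℝ)
    (hX : Measurable X) (hX' : Measurable X') (hY : Measurable Y) (hY' : Measurable Y')
    (hXint : Integrable X μ) (hYint : Integrable Y μ)
    (hXid : IdentDistrib X X' μ μ) (hYid : IdentDistrib Y Y' μ μ)
    (hind : iIndepFun ![X, X', Y, Y'] μ) :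
    ∫ x : ℝ, ((μ {ω | X ω ≤ x}).toReal - (μ {ω | Y ω ≤ x}).toReal) ^ 2 =
      (∫ ω, |X ω - Y ω| ∂μ)
        - (1 / 2) * (∫ ω, |X ω - X' ω| ∂μ)
        - (1 / 2) * (∫ ω, |Y ω - Y' ω| ∂μ) := by
  have hXY : IndepFun X Y μ := by simpa using hind.indepFun (i := 0) (j := 2) (by decide)
  have hXX' : IndepFun X X' μ := by simpa using hind.indepFun (i := 0) (j := 1) (by decide)
  have hYY' : IndepFun Y Y' μ := by simpa using hind.indepFun (i := 2) (j := 3) (by decide)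
  have hXY_int := hXint.sub hYint
  have hXX'_int := hXint.sub (hXid.integrable_iff.1 hXint)
  have hYY'_int := hYint.sub (hYid.integrable_iff.1 hYint)
  have hpt (x : ℝ) : ((μ {ω | X ω ≤ x}).toReal - (μ {ω | Y ω ≤ x}).toReal) ^ 2
      = μ.real ({ω | X ω ≤ x} ∆ {ω | Y ω ≤ x})
        - 1 / 2 * μ.real ({ω | X ω ≤ x} ∆ {ω | X' ω ≤ x})
        - 1 / 2 * μ.real ({ω | Y ω ≤ x} ∆ {ω | Y' ω ≤ x}) := by
    rw [hXY.measureReal_symmDiff_eq hX hY, hXX'.measureReal_symmDiff_eq hX hX',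
      hYY'.measureReal_symmDiff_eq hY hY', ← hXid.measureReal_le_eq, ← hYid.measureReal_le_eq]
    simp only [measureReal_def]
    ring
  simp only [hpt]
  rw [integral_sub ?_ ((integrable_measureReal_symmDiff hY hY' hYY'_int).const_mul _),
    integral_sub (integrable_measureReal_symmDiff hX hY hXY_int)
      ((integrable_measureReal_symmDiff hX hX' hXX'_int).const_mul _),
    integral_const_mul, integral_const_mul,
    integral_abs_sub_eq_integral_measureReal_symmDiff hX hY hXY_int,
    integral_abs_sub_eq_integral_measureReal_symmDiff hX hX' hXX'_int,
    integral_abs_sub_eq_integral_measureReal_symmDiff hY hY' hYY'_int]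
  exact (integrable_measureReal_symmDiff hX hY hXY_int).sub
    ((integrable_measureReal_symmDiff hX hX' hXX'_int).const_mul _)
end

section
/- Let X, X' be i.i.d. nonnegative integrable random variables with CDF F and E(X) > 0. Then the Gini index G(X) = E|X - X'|/(2E(X)) equals 1 - (1/E(X))·∫_0^∞ (1 - F(x))² dx. -/
open MeasureTheory ProbabilityTheory Set

/-!
Since `|X - X'| = X + X' - 2 min(X, X')`, the claim amounts to `E min(X, X') = ∫₀^∞ (1 - F)²`.
By independence the tail of `min(X, X')` is the square of the tail `1 - F` of `X`, so this is the
layer cake formula for the nonnegative variable `min(X, X')`.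
-/

theorem abs_sub_eq_add_sub_two_mul_min {α : Type*} [CommRing α] [LinearOrder α] [IsOrderedRing α]
    (a b : α) : |a - b| = a + b - 2 * min a b := by
  rw [abs_sub_comm, ← max_sub_min_eq_abs, ← min_add_max a b]
  ring

section

variable {Ω : Type*} [MeasurableSpace Ω] {μ : Measure Ω}

theorem integral_abs_sub_eq {X X' : Ω → ℝ} (hX : Integrable X μ) (hX' : Integrable X' μ) :
    ∫ ω, |X ω - X' ω| ∂μ =
      ∫ ω, X ω ∂μ + ∫ ω, X' ω ∂μ - 2 * ∫ ω, min (X ω) (X' ω) ∂μ := by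
  have hmin : Integrable (fun ω ↦ min (X ω) (X' ω)) μ := hX.inf hX'
  simp_rw [abs_sub_eq_add_sub_two_mul_min]
  rw [integral_sub (by fun_prop) (hmin.const_mul 2), integral_add hX hX', integral_const_mul]

theorem ProbabilityTheory.IndepFun.measure_lt_min_eq_sq {β : Type*} [LinearOrder β]
    [TopologicalSpace β] [OrderClosedTopology β] [MeasurableSpace β] [OpensMeasurableSpace β]
    {X X' : Ω → β}
    (hind : IndepFun X X' μ) (hid : IdentDistrib X X' μ μ) (x : β) :
    μ {ω | x < min (X ω) (X' ω)} = μ {ω | x < X ω} ^ 2 := by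
  have hinter : {ω | x < min (X ω) (X' ω)} = X ⁻¹' Ioi x ∩ X' ⁻¹' Ioi x := by
    ext ω; simp
  rw [hinter, hind.measure_inter_preimage_eq_mul _ _ measurableSet_Ioi measurableSet_Ioi,
    ← hid.measure_mem_eq measurableSet_Ioi, sq]
  rfl

theorem integral_min_eq_integral_measureReal_lt_sq {X X' : Ω → ℝ} (hX : Integrable X μ)
    (hXnn : 0 ≤ᵐ[μ] X) (hX'nn : 0 ≤ᵐ[μ] X') (hind : IndepFun X X' μ)
    (hid : IdentDistrib X X' μ μ) :
    ∫ ω, min (X ω) (X' ω) ∂μ = ∫ x in Ioi 0, μ.real {ω | x < X ω} ^ 2 := by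
  have hmin_nn : 0 ≤ᵐ[μ] fun ω ↦ min (X ω) (X' ω) := by
    filter_upwards [hXnn, hX'nn] with ω h h' using le_min h h'
  have hmin : Integrable (fun ω ↦ min (X ω) (X' ω)) μ := hX.inf (hid.integrable_snd hX)
  rw [hmin.integral_eq_integral_meas_lt hmin_nn]
  congr! 2 with x
  rw [measureReal_def, measureReal_def, hind.measure_lt_min_eq_sq hid, ENNReal.toReal_pow]

theorem measureReal_lt_eq_one_sub [IsProbabilityMeasure μ] {X : Ω → ℝ} (hX : AEMeasurable X μ)
    (x : ℝ) : μ.real {ω | x < X ω} = 1 - μ.real {ω | X ω ≤ x} := by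
  rw [← probReal_compl_eq_one_sub₀ (s := {ω | X ω ≤ x}) (hX.nullMeasurable measurableSet_Iic)]
  congr 1
  ext ω
  simp

end

theorem gini_index_eq_one_sub_integral_general {Ω : Type*} [MeasurableSpace Ω]
    (μ : Measure Ω) [IsProbabilityMeasure μ]
    (X X' : Ω → ℝ)
    (hXnn : ∀ ω, 0 ≤ X ω) (hX'nn : ∀ ω, 0 ≤ X' ω)
    (hXint : Integrable X μ)
    (hid : IdentDistrib X X' μ μ) (hind : IndepFun X X' μ)
    (hEpos : 0 < ∫ ω, X ω ∂μ) :
    (∫ ω, |X ω - X' ω| ∂μ) / (2 * ∫ ω, X ω ∂μ) =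
      1 - (1 / ∫ ω, X ω ∂μ) *
        ∫ x in Ioi (0 : ℝ), (1 - (μ {ω | X ω ≤ x}).toReal) ^ 2 := by
  have htail : ∫ x in Ioi (0 : ℝ), (1 - (μ {ω | X ω ≤ x}).toReal) ^ 2 =
      ∫ ω, min (X ω) (X' ω) ∂μ := by
    simp only [← measureReal_def, ← measureReal_lt_eq_one_sub hXint.aemeasurable]
    exact (integral_min_eq_integral_measureReal_lt_sq hXint (ae_of_all _ hXnn)
      (ae_of_all _ hX'nn) hind hid).symm
  rw [integral_abs_sub_eq hXint (hid.integrable_snd hXint), ← hid.integral_eq, htail]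
  field_simp
  ring

theorem gini_index_eq_one_sub_integral {Ω : Type*} [MeasurableSpace Ω]
    (μ : Measure Ω) [IsProbabilityMeasure μ]
    (X X' : Ω → ℝ) (hX : Measurable X) (hX' : Measurable X')
    (hXnn : ∀ ω, 0 ≤ X ω) (hX'nn : ∀ ω, 0 ≤ X' ω)
    (hXint : Integrable X μ)
    (hid : IdentDistrib X X' μ μ) (hind : IndepFun X X' μ)
    (hEpos : 0 < ∫ ω, X ω ∂μ) :
    (∫ ω, |X ω - X' ω| ∂μ) / (2 * ∫ ω, X ω ∂μ) =
      1 - (1 / ∫ ω, X ω ∂μ) *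
        ∫ x in Ioi (0 : ℝ), (1 - (μ {ω | X ω ≤ x}).toReal) ^ 2 :=
  gini_index_eq_one_sub_integral_general μ X X' hXnn hX'nn hXint hid hind hEpos
end
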